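/- Let u be a second-order process with covariance function c, let k ≥ 1, and assume c is 2k-times continuously differentiable on ℝ^d × ℝ^d. Let L_α : ℝ^d → ℝ for each multi-index α with |α| ≤ k and B_β : ℝ^d → ℝ for each multi-index β with |β| ≤ k − 1 be arbitrary coefficient functions, and define for each x, x' ∈ ℝ^d the elements of L²(μ): L[u](x) = Σ_{|α| ≤ k} L_α(x) ∂^α u(x) and B[u](x') = Σ_{|β| ≤ k−1} B_β(x') ∂^β u(x'). Then ∫ L[u](x) · B[u](x') dμ = Σ_{|α| ≤ k} Σ_{|β| ≤ k−1} L_α(x) B_β(x') ∂^α_x ∂^β_{x'} c(x, x'), i.e. the covariance of the operator observations is obtained by applying the operator in x to the first argument of c and the operator in x' to the second argument. -/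

import Mathlib

open MeasureTheory Filter

/-- `v` has mean-square (norm) partial derivative `w` in the coordinate direction `r`,
at every point: `(v(x + h e_r) − v(x))/h → w(x)` in the norm of `E` as `h → 0`. -/
def HasMSPartialDeriv {d : ℕ} {E : Type*} [NormedAddCommGroup E] [NormedSpace ℝ E]
    (v : (Fin d → ℝ) → E) (r : Fin d) (w : (Fin d → ℝ) → E) : Prop :=
  ∀ x : Fin d → ℝ,
    Tendsto (fun h : ℝ => h⁻¹ • (v (x + h • (Pi.single r 1 : Fin d → ℝ)) - v x))
      (nhdsWithin 0 {0}ᶜ) (nhds (w x))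

/-- `w` is the iterated mean-square partial derivative of `v` along the list of
coordinate directions `L` (applied successively). -/
def HasMSIterDeriv {d : ℕ} {E : Type*} [NormedAddCommGroup E] [NormedSpace ℝ E]
    (v : (Fin d → ℝ) → E) : List (Fin d) → ((Fin d → ℝ) → E) → Prop
  | [], w => w = v
  | r :: L, w => ∃ w', HasMSIterDeriv v L w' ∧ HasMSPartialDeriv w' r w

/-- Iterated partial derivative of a scalar function along a list of coordinate directions. -/
noncomputable def partialDerivList {d : ℕ} :
    List (Fin d) → ((Fin d → ℝ) → ℝ) → ((Fin d → ℝ) → ℝ)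
  | [], f => f
  | r :: L, f => fun x => fderiv ℝ (partialDerivList L f) x (Pi.single r 1)

/-! Since `c y z = ⟪u y, u z⟫`, pairing with a fixed vector is a continuous linear functional,
which commutes with mean-square differentiation: the partial derivatives of `z ↦ c y z` along `β`
are `⟪u y, ∂^β u z⟫`, and then those of `y ↦ ⟪u y, ∂^β u x'⟫` along `α` are
`⟪∂^α u y, ∂^β u x'⟫`. Smoothness of `c` is what lets the Fréchet derivatives defining
`partialDerivList` be computed as these directional limits. Bilinearity of the `L²` inner
product then gives the claim. -/

section

variable {d : ℕ} {E F : Type*} [NormedAddCommGroup E] [NormedSpace ℝ E]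
  [NormedAddCommGroup F] [NormedSpace ℝ F]

theorem HasMSPartialDeriv.continuousLinearMap_comp {v w : (Fin d → ℝ) → E} {r : Fin d}
    (h : HasMSPartialDeriv v r w) (ℓ : E →L[ℝ] F) : HasMSPartialDeriv (ℓ ∘ v) r (ℓ ∘ w) := by
  intro x
  simpa [Function.comp_def] using (ℓ.continuous.tendsto (w x)).comp (h x)

theorem HasMSIterDeriv.continuousLinearMap_comp {v : (Fin d → ℝ) → E} (ℓ : E →L[ℝ] F) :
    ∀ {L : List (Fin d)} {W : (Fin d → ℝ) → E},
      HasMSIterDeriv v L W → HasMSIterDeriv (ℓ ∘ v) L (ℓ ∘ W)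
  | [], _, h => congrArg (ℓ ∘ ·) h
  | _ :: _, _, ⟨W', hW', hr⟩ =>
    ⟨ℓ ∘ W', continuousLinearMap_comp ℓ hW', hr.continuousLinearMap_comp ℓ⟩

theorem HasMSPartialDeriv.fderiv_apply_single {f g : (Fin d → ℝ) → F} {r : Fin d}
    (h : HasMSPartialDeriv f r g) {x : Fin d → ℝ} (hf : DifferentiableAt ℝ f x) :
    fderiv ℝ f x (Pi.single r 1) = g x := by
  have hline : HasDerivAt (fun t : ℝ => x + t • (Pi.single r 1 : Fin d → ℝ))
      (Pi.single r 1) 0 := by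
    simpa using ((hasDerivAt_id (0 : ℝ)).smul_const (Pi.single r 1 : Fin d → ℝ)).const_add x
  have hf' : HasFDerivAt f (fderiv ℝ f x) (x + (0 : ℝ) • (Pi.single r 1 : Fin d → ℝ)) := by
    simpa using hf.hasFDerivAt
  refine tendsto_nhds_unique ?_ (h x)
  refine (hasDerivAt_iff_tendsto_slope.mp (hf'.comp_hasDerivAt 0 hline)).congr fun t => ?_
  simp [slope]

theorem contDiff_uncurry_partialDerivList {P : Type*} [NormedAddCommGroup P] [NormedSpace ℝ P]
    {f : P → (Fin d → ℝ) → ℝ} {n : ℕ} (hf : ContDiff ℝ n (Function.uncurry f)) :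
    ∀ (L : List (Fin d)) {m : ℕ}, L.length + m ≤ n →
      ContDiff ℝ m (Function.uncurry fun p => partialDerivList L (f p))
  | [], m, h => hf.of_le (by exact_mod_cast (Nat.le_add_left m 0).trans h)
  | r :: L, m, h => by
    have hL := contDiff_uncurry_partialDerivList hf L (m := m + 1)
      (by simp only [List.length_cons] at h; omega)
    have hfderiv : ContDiff ℝ m fun q : P × (Fin d → ℝ) =>
        fderiv ℝ (partialDerivList L (f q.1)) q.2 :=
      ContDiff.fderiv (f := fun q z => partialDerivList L (f q.1) z)
        (hL.comp (contDiff_fst.fst.prodMk contDiff_snd)) contDiff_snd (by simp)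
    exact hfderiv.clm_apply contDiff_const

theorem ContDiff.partialDerivList {f : (Fin d → ℝ) → ℝ} {n m : ℕ} (hf : ContDiff ℝ n f)
    {L : List (Fin d)} (h : L.length + m ≤ n) : ContDiff ℝ m (partialDerivList L f) :=
  (contDiff_uncurry_partialDerivList (f := fun (_ : ℝ) => f) (hf.comp contDiff_snd) L h).comp
    ((contDiff_const (c := (0 : ℝ))).prodMk contDiff_id)

theorem HasMSIterDeriv.partialDerivList_eq {f g : (Fin d → ℝ) → ℝ} {n : ℕ}
    (hf : ContDiff ℝ n f) : ∀ {L : List (Fin d)}, HasMSIterDeriv f L g → L.length ≤ n →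
      partialDerivList L f = g
  | [], h, _ => h.symm
  | r :: L, ⟨g', hg', hr⟩, hL => by
    have hL' : L.length + 1 ≤ n := by simpa using hL
    have hdiff : Differentiable ℝ g' :=
      partialDerivList_eq hf hg' (by omega) ▸ (hf.partialDerivList hL').differentiable one_ne_zero
    funext x
    change fderiv ℝ (partialDerivList L f) x (Pi.single r 1) = g x
    rw [partialDerivList_eq hf hg' (by omega)]
    exact hr.fderiv_apply_single (hdiff x)

end

theorem partialDerivList_partialDerivList_of_eq_inner {d : ℕ} {E : Type*} [NormedAddCommGroup E]
    [InnerProductSpace ℝ E]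
    {u : (Fin d → ℝ) → E} {c : (Fin d → ℝ) → (Fin d → ℝ) → ℝ}
    (hc : ∀ y z, c y z = inner ℝ (u y) (u z)) {n : ℕ} (hcn : ContDiff ℝ n (Function.uncurry c))
    {L L' : List (Fin d)} {W W' : (Fin d → ℝ) → E}
    (hW : HasMSIterDeriv u L W) (hW' : HasMSIterDeriv u L' W') (hn : L.length + L'.length ≤ n)
    (x x' : Fin d → ℝ) :
    partialDerivList L (fun y => partialDerivList L' (c y) x') x = inner ℝ (W x) (W' x') := by
  have hinner (y : Fin d → ℝ) : partialDerivList L' (c y) = innerSL ℝ (u y) ∘ W' := by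
    have hcy : c y = innerSL ℝ (u y) ∘ u := funext (hc y)
    rw [hcy]
    refine (hW'.continuousLinearMap_comp _).partialDerivList_eq (n := n) ?_ (by omega)
    exact hcy ▸ hcn.comp (contDiff_const.prodMk contDiff_id)
  have hG : (fun y => partialDerivList L' (c y) x') = innerSL ℝ (W' x') ∘ u := by
    funext y
    simp [hinner, real_inner_comm]
  have hGsmooth : ContDiff ℝ L.length (innerSL ℝ (W' x') ∘ u) :=
    hG ▸ (contDiff_uncurry_partialDerivList hcn L' (m := L.length) (by omega)).comp
      (contDiff_id.prodMk contDiff_const)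
  rw [hG, (hW.continuousLinearMap_comp (innerSL ℝ (W' x'))).partialDerivList_eq hGsmooth le_rfl]
  simp [real_inner_comm]

theorem MeasureTheory.L2.integral_mul_eq_inner {Ω : Type*} [MeasurableSpace Ω] {μ : Measure Ω}
    (f g : Lp ℝ 2 μ) : ∫ ω, (f : Ω → ℝ) ω * (g : Ω → ℝ) ω ∂μ = inner ℝ f g := by
  simp [L2.inner_def, mul_comm]

theorem List.length_eq_sum_count {α : Type*} [Fintype α] [DecidableEq α] (l : List α) :
    l.length = ∑ a, l.count a := by
  simpa using (Multiset.sum_count_eq_card (s := Finset.univ) (m := (l : Multiset α))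
    (by simp)).symm

theorem covariance_of_operator_observations_general
    {Ω : Type*} [MeasurableSpace Ω] {μ : Measure Ω}
    {d : ℕ}
    (u : (Fin d → ℝ) → Lp ℝ 2 μ)
    (c : (Fin d → ℝ) → (Fin d → ℝ) → ℝ)
    (hc : ∀ x x' : Fin d → ℝ, c x x' = ∫ ω, (u x : Ω → ℝ) ω * (u x' : Ω → ℝ) ω ∂μ)
    (k : ℕ)
    (hC2k : ContDiff ℝ (2 * k) (Function.uncurry c))
    (Lcoef Bcoef : (Fin d → Fin (k + 1)) → (Fin d → ℝ) → ℝ)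
    (Lst : (Fin d → Fin (k + 1)) → List (Fin d))
    (hLst : ∀ α : Fin d → Fin (k + 1), ∀ r, (Lst α).count r = (α r : ℕ))
    (w : (Fin d → Fin (k + 1)) → (Fin d → ℝ) → Lp ℝ 2 μ)
    (hw : ∀ α : Fin d → Fin (k + 1), (∑ r, (α r : ℕ)) ≤ k →
      HasMSIterDeriv u (Lst α) (w α))
    (x x' : Fin d → ℝ) :
    ∫ ω, ((∑ α ∈ Finset.univ.filter (fun α : Fin d → Fin (k + 1) => (∑ r, (α r : ℕ)) ≤ k),
            Lcoef α x • w α x : Lp ℝ 2 μ) : Ω → ℝ) ω *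
          ((∑ β ∈ Finset.univ.filter (fun β : Fin d → Fin (k + 1) => (∑ r, (β r : ℕ)) ≤ k - 1),
            Bcoef β x' • w β x' : Lp ℝ 2 μ) : Ω → ℝ) ω ∂μ
      = ∑ α ∈ Finset.univ.filter (fun α : Fin d → Fin (k + 1) => (∑ r, (α r : ℕ)) ≤ k),
          ∑ β ∈ Finset.univ.filter (fun β : Fin d → Fin (k + 1) => (∑ r, (β r : ℕ)) ≤ k - 1),
            Lcoef α x * Bcoef β x' *
              partialDerivList (Lst α) (fun y => partialDerivList (Lst β) (fun z => c y z) x') x := by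
  have hlen (α : Fin d → Fin (k + 1)) : (Lst α).length = ∑ r, (α r : ℕ) := by
    simp only [(Lst α).length_eq_sum_count, hLst]
  have hc' (y z : Fin d → ℝ) : c y z = inner ℝ (u y) (u z) := by
    rw [hc, L2.integral_mul_eq_inner]
  rw [L2.integral_mul_eq_inner, sum_inner]
  refine Finset.sum_congr rfl fun α hα => ?_
  rw [inner_sum]
  refine Finset.sum_congr rfl fun β hβ => ?_
  obtain ⟨-, hα⟩ := Finset.mem_filter.mp hα
  obtain ⟨-, hβ⟩ := Finset.mem_filter.mp hβ
  rw [real_inner_smul_left, real_inner_smul_right,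
    partialDerivList_partialDerivList_of_eq_inner hc' (n := 2 * k) (by exact_mod_cast hC2k)
      (hw α hα) (hw β (by omega)) (by rw [hlen, hlen]; omega)]
  ring

/-- Let `u` be a second-order (mean-zero, `L²`) process whose covariance
function `c` is `2k`-times continuously differentiable, `k ≥ 1`.  Multi-indices `α` with
`|α| ≤ k` are encoded as functions `Fin d → Fin (k+1)` with `∑ r, α r ≤ k`, each realized
by a list `Lst α` of coordinate directions with the prescribed counts, along which the
iterated mean-square derivative of `u` is `w α`.  Given arbitrary coefficient functions
`Lcoef α` (for `|α| ≤ k`) and `Bcoef β` (for `|β| ≤ k − 1`), define the operator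
observations `L[u](x) = ∑_{|α| ≤ k} Lcoef α x • ∂^α u(x)` and
`B[u](x') = ∑_{|β| ≤ k−1} Bcoef β x' • ∂^β u(x')`.  Then
`∫ L[u](x) ⬝ B[u](x') dμ = ∑_{|α| ≤ k} ∑_{|β| ≤ k−1} Lcoef α x ⬝ Bcoef β x' ⬝ ∂^α_x ∂^β_{x'} c(x,x')`. -/
theorem covariance_of_operator_observations
    {Ω : Type*} [MeasurableSpace Ω] {μ : Measure Ω} [IsProbabilityMeasure μ]
    {d : ℕ}
    (u : (Fin d → ℝ) → Lp ℝ 2 μ)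
    (hmean : ∀ x : Fin d → ℝ, ∫ ω, (u x : Ω → ℝ) ω ∂μ = 0)
    (c : (Fin d → ℝ) → (Fin d → ℝ) → ℝ)
    (hc : ∀ x x' : Fin d → ℝ, c x x' = ∫ ω, (u x : Ω → ℝ) ω * (u x' : Ω → ℝ) ω ∂μ)
    (k : ℕ) (hk : 1 ≤ k)
    (hC2k : ContDiff ℝ (2 * k) (Function.uncurry c))
    (Lcoef Bcoef : (Fin d → Fin (k + 1)) → (Fin d → ℝ) → ℝ)
    (Lst : (Fin d → Fin (k + 1)) → List (Fin d))
    (hLst : ∀ α : Fin d → Fin (k + 1), ∀ r, (Lst α).count r = (α r : ℕ))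
    (w : (Fin d → Fin (k + 1)) → (Fin d → ℝ) → Lp ℝ 2 μ)
    (hw : ∀ α : Fin d → Fin (k + 1), (∑ r, (α r : ℕ)) ≤ k →
      HasMSIterDeriv u (Lst α) (w α))
    (x x' : Fin d → ℝ) :
    ∫ ω, ((∑ α ∈ Finset.univ.filter (fun α : Fin d → Fin (k + 1) => (∑ r, (α r : ℕ)) ≤ k),
            Lcoef α x • w α x : Lp ℝ 2 μ) : Ω → ℝ) ω *
          ((∑ β ∈ Finset.univ.filter (fun β : Fin d → Fin (k + 1) => (∑ r, (β r : ℕ)) ≤ k - 1),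
            Bcoef β x' • w β x' : Lp ℝ 2 μ) : Ω → ℝ) ω ∂μ
      = ∑ α ∈ Finset.univ.filter (fun α : Fin d → Fin (k + 1) => (∑ r, (α r : ℕ)) ≤ k),
          ∑ β ∈ Finset.univ.filter (fun β : Fin d → Fin (k + 1) => (∑ r, (β r : ℕ)) ≤ k - 1),
            Lcoef α x * Bcoef β x' *
              partialDerivList (Lst α) (fun y => partialDerivList (Lst β) (fun z => c y z) x') x :=
  covariance_of_operator_observations_general u c hc k hC2k Lcoef Bcoef Lst hLst w hw x x'
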